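/- arXiv:solv-int/9807002 — 3 statements merged into one kernel-verified Lean document; each statement's English description precedes it below -/
import Mathlib

section
/- Let N be a positive integer and let p be an integer with either −2N+1 ≤ p ≤ −N or −1 ≤ p ≤ N−2. Define c_{ij}^k = δ_{i+j, k−p} for 1 ≤ i,j,k ≤ N. Then for all integers i, j, l, n with 1 ≤ i,j,l,n ≤ N, one has ∑_{k=1}^N c_{ij}^k · c_{kl}^n = ∑_{k=1}^N c_{li}^k · c_{kj}^n, and moreover both sums equal 1 if n − i − j − l = 2p and equal 0 otherwise. In particular the coupled condition holds for these values of p. -/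
/-- For `c_{ij}^k = δ_{i+j, k-p}` with `-2N+1 ≤ p ≤ -N` or `-1 ≤ p ≤ N-2`,
the coupled condition holds, and both sums equal `1` exactly when `n - i - j - l = 2p`. -/
theorem stmt_0 (N : ℕ) (hN : 0 < N) (p : ℤ)
    (hp : (-2 * (N : ℤ) + 1 ≤ p ∧ p ≤ -(N : ℤ)) ∨ (-1 ≤ p ∧ p ≤ (N : ℤ) - 2))
    (c : ℤ → ℤ → ℤ → ℝ)
    (hc : ∀ i j k : ℤ, c i j k = if i + j = k - p then 1 else 0) :
    ∀ i j l n : ℤ, i ∈ Finset.Icc 1 (N : ℤ) → j ∈ Finset.Icc 1 (N : ℤ) →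
      l ∈ Finset.Icc 1 (N : ℤ) → n ∈ Finset.Icc 1 (N : ℤ) →
      (∑ k ∈ Finset.Icc 1 (N : ℤ), c i j k * c k l n)
        = (∑ k ∈ Finset.Icc 1 (N : ℤ), c l i k * c k j n) ∧
      (∑ k ∈ Finset.Icc 1 (N : ℤ), c i j k * c k l n)
        = (if n - i - j - l = 2 * p then 1 else 0) ∧
      (∑ k ∈ Finset.Icc 1 (N : ℤ), c l i k * c k j n)
        = (if n - i - j - l = 2 * p then 1 else 0) := by
  intro i j l n hi hj hl hn
  simp only [Finset.mem_Icc] at hi hj hl hn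
  have key : ∀ a b u v : ℤ, 1 ≤ a → a ≤ N → 1 ≤ b → b ≤ N → 1 ≤ u → u ≤ N →
      1 ≤ v → v ≤ N →
      (∑ k ∈ Finset.Icc 1 (N : ℤ), c a b k * c k u v)
        = (if v - a - b - u = 2 * p then 1 else 0) := by
    intro a b u v ha1 ha2 hb1 hb2 hu1 hu2 hv1 hv2
    have h1 : (∑ k ∈ Finset.Icc 1 (N : ℤ), c a b k * c k u v)
        = ∑ k ∈ Finset.Icc 1 (N : ℤ),
            (if k = a + b + p then ((if k = v - u - p then (1:ℝ) else 0)) else 0) := by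
      refine Finset.sum_congr rfl fun k _ => ?_
      rw [hc, hc]
      have e1 : (a + b = k - p) ↔ (k = a + b + p) := by omega
      have e2 : (k + u = v - p) ↔ (k = v - u - p) := by omega
      simp only [e1, e2, ite_mul, one_mul, zero_mul]
    rw [h1, Finset.sum_ite_eq' (Finset.Icc 1 (N : ℤ)) (a + b + p)
      (fun k => if k = v - u - p then (1:ℝ) else 0)]
    by_cases hcond : v - a - b - u = 2 * p
    · have hmem : a + b + p ∈ Finset.Icc 1 (N : ℤ) := by
        simp only [Finset.mem_Icc]
        rcases hp with ⟨hp1, hp2⟩ | ⟨hp1, hp2⟩ <;> constructor <;> omega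
      rw [if_pos hmem, if_pos (by omega : a + b + p = v - u - p), if_pos hcond]
    · rw [if_neg hcond]
      by_cases hmem : a + b + p ∈ Finset.Icc 1 (N : ℤ)
      · rw [if_pos hmem, if_neg (by omega)]
      · rw [if_neg hmem]
  have k1 := key i j l n hi.1 hi.2 hj.1 hj.2 hl.1 hl.2 hn.1 hn.2
  have k2 := key l i j n hl.1 hl.2 hi.1 hi.2 hj.1 hj.2 hn.1 hn.2
  have : (if n - l - i - j = 2 * p then (1:ℝ) else 0)
      = (if n - i - j - l = 2 * p then (1:ℝ) else 0) := by
    congr 1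
    simp only [eq_iff_iff]
    omega
  rw [this] at k2
  exact ⟨k1.trans k2.symm, k1, k2⟩
end

section
/- Let N ≥ 3 be an integer and let p be an integer with −N < p < −1. Define c_{ij}^k = δ_{i+j, k−p} for 1 ≤ i,j,k ≤ N. Then with the choice i = −p−1, j = −p+1, l = 1, n = 1 (all of which lie in {1,…,N}), one has ∑_{k=1}^N c_{ij}^k · c_{kl}^n = 1 while ∑_{k=1}^N c_{li}^k · c_{kj}^n = 0. In particular the coupled condition fails for every integer p with −N < p < −1. -/
/-- For `c_{ij}^k = δ_{i+j, k-p}` with `-N < p < -1` (and `N ≥ 3`),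
the choice `i = -p-1`, `j = -p+1`, `l = n = 1` violates the coupled condition;
in particular the coupled condition fails for every such `p`. -/
theorem stmt_1 (N : ℕ) (hN : 3 ≤ N) (p : ℤ) (hp : -(N : ℤ) < p ∧ p < -1)
    (c : ℤ → ℤ → ℤ → ℝ)
    (hc : ∀ i j k : ℤ, c i j k = if i + j = k - p then 1 else 0) :
    (-p - 1) ∈ Finset.Icc 1 (N : ℤ) ∧ (-p + 1) ∈ Finset.Icc 1 (N : ℤ) ∧
    (1 : ℤ) ∈ Finset.Icc 1 (N : ℤ) ∧
    (∑ k ∈ Finset.Icc 1 (N : ℤ), c (-p - 1) (-p + 1) k * c k 1 1) = 1 ∧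
    (∑ k ∈ Finset.Icc 1 (N : ℤ), c 1 (-p - 1) k * c k (-p + 1) 1) = 0 ∧
    ¬ (∀ i j l n : ℤ, i ∈ Finset.Icc 1 (N : ℤ) → j ∈ Finset.Icc 1 (N : ℤ) →
        l ∈ Finset.Icc 1 (N : ℤ) → n ∈ Finset.Icc 1 (N : ℤ) →
        (∑ k ∈ Finset.Icc 1 (N : ℤ), c i j k * c k l n)
          = (∑ k ∈ Finset.Icc 1 (N : ℤ), c l i k * c k j n)) := by
  obtain ⟨hp1, hp2⟩ := hp
  have hi : (-p - 1) ∈ Finset.Icc 1 (N : ℤ) := by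
    simp only [Finset.mem_Icc]; omega
  have hj : (-p + 1) ∈ Finset.Icc 1 (N : ℤ) := by
    simp only [Finset.mem_Icc]; omega
  have hl : (1 : ℤ) ∈ Finset.Icc 1 (N : ℤ) := by
    simp only [Finset.mem_Icc]; omega
  have h1 : (∑ k ∈ Finset.Icc 1 (N : ℤ), c (-p - 1) (-p + 1) k * c k 1 1) = 1 := by
    have hterm : ∀ k : ℤ, c (-p - 1) (-p + 1) k * c k 1 1
        = if k = -p then 1 else 0 := by
      intro k
      rw [hc, hc]
      by_cases h : k = -p
      · subst h
        rw [if_pos (by ring), if_pos (by ring), if_pos rfl]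
        norm_num
      · rw [if_neg h]
        by_cases h2 : -p - 1 + (-p + 1) = k - p
        · omega
        · rw [if_neg h2]; ring
    rw [Finset.sum_congr rfl (fun k _ => hterm k), Finset.sum_ite_eq']
    rw [if_pos (by simp only [Finset.mem_Icc]; omega)]
  have h2 : (∑ k ∈ Finset.Icc 1 (N : ℤ), c 1 (-p - 1) k * c k (-p + 1) 1) = 0 := by
    apply Finset.sum_eq_zero
    intro k hk
    simp only [Finset.mem_Icc] at hk
    rw [hc]
    rw [if_neg (by omega)]
    ring
  refine ⟨hi, hj, hl, h1, h2, ?_⟩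
  intro H
  have := H (-p - 1) (-p + 1) 1 1 hi hj hl hl
  rw [h1, h2] at this
  norm_num at this
end

section
/- Let N be a positive integer, X a set, and for each n with 1 ≤ n ≤ N let T_n : X × X × X → ℝ be a function satisfying the cyclic identity T_n(x,y,z) + T_n(y,z,x) + T_n(z,x,y) = 0 for all x, y, z ∈ X. Let c_{ij}^k (1 ≤ i,j,k ≤ N) be real constants satisfying the coupled condition. For maps α, β, γ : {1,…,N} → X define T(α,β,γ) = ∑_{i,j,l,n=1}^N (∑_{k=1}^N c_{ij}^k c_{kl}^n) T_n(α_i, β_l, γ_j). Then T(α,β,γ) + T(β,γ,α) + T(γ,α,β) = 0 for all α, β, γ. (This is the core algebraic identity in the proof that the extended operator J(u) = (∑_k c_{ij}^k J_k(u_k)) satisfies the Jacobi identity.) -/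
lemma cyc3_sum {M : ℕ} (g : Fin M → Fin M → Fin M → ℝ) :
    (∑ i, ∑ j, ∑ l, g i j l) = ∑ i, ∑ j, ∑ l, g l i j := by
  rw [Finset.sum_comm]
  exact Finset.sum_congr rfl fun _ _ => Finset.sum_comm

/-- If each `T_n` satisfies the cyclic identity
`T_n(x,y,z) + T_n(y,z,x) + T_n(z,x,y) = 0` and the constants `c_{ij}^k` satisfy
the coupled condition, then the combination
`T(α,β,γ) = ∑_{i,j,l,n} (∑_k c_{ij}^k c_{kl}^n) T_n(α_i, β_l, γ_j)` also
satisfies the cyclic identity `T(α,β,γ) + T(β,γ,α) + T(γ,α,β) = 0`. -/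
theorem stmt_9 (N : ℕ) (hN : 0 < N) (X : Type*)
    (T : Fin N → X → X → X → ℝ)
    (hcyc : ∀ (n : Fin N) (x y z : X), T n x y z + T n y z x + T n z x y = 0)
    (c : Fin N → Fin N → Fin N → ℝ)
    (hcoupled : ∀ i j l n : Fin N,
      ∑ k, c i j k * c k l n = ∑ k, c l i k * c k j n)
    (Tb : (Fin N → X) → (Fin N → X) → (Fin N → X) → ℝ)
    (hTb : ∀ α β γ : Fin N → X,
      Tb α β γ = ∑ i, ∑ j, ∑ l, ∑ n,
        (∑ k, c i j k * c k l n) * T n (α i) (β l) (γ j)) :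
    ∀ α β γ : Fin N → X, Tb α β γ + Tb β γ α + Tb γ α β = 0 := by
  intro α β γ
  have h2 : Tb β γ α = ∑ i, ∑ j, ∑ l, ∑ n,
      (∑ k, c i j k * c k l n) * T n (β l) (γ j) (α i) := by
    rw [hTb, cyc3_sum fun i j l => ∑ n, (∑ k, c i j k * c k l n) * T n (β i) (γ l) (α j)]
    refine Finset.sum_congr rfl fun i _ => Finset.sum_congr rfl fun j _ =>
      Finset.sum_congr rfl fun l _ => Finset.sum_congr rfl fun n _ => ?_
    rw [← hcoupled]
  have h3 : Tb γ α β = ∑ i, ∑ j, ∑ l, ∑ n,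
      (∑ k, c i j k * c k l n) * T n (γ j) (α i) (β l) := by
    rw [hTb, cyc3_sum fun i j l => ∑ n, (∑ k, c i j k * c k l n) * T n (γ i) (α l) (β j),
      cyc3_sum fun i j l => ∑ n, (∑ k, c l i k * c k j n) * T n (γ l) (α j) (β i)]
    refine Finset.sum_congr rfl fun i _ => Finset.sum_congr rfl fun j _ =>
      Finset.sum_congr rfl fun l _ => Finset.sum_congr rfl fun n _ => ?_
    rw [← hcoupled, ← hcoupled]
  rw [hTb, h2, h3]
  simp only [← Finset.sum_add_distrib, ← mul_add]
  refine Finset.sum_eq_zero fun i _ => Finset.sum_eq_zero fun j _ =>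
    Finset.sum_eq_zero fun l _ => Finset.sum_eq_zero fun n _ => ?_
  rw [hcyc, mul_zero]
end
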